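/- (Proposition 7.1) For every Q-graph D, every X in {W,E} and every X-edge d of D, there is a construction G of a global Q-graph whose root graph is D and such that NX(G)=SX(G)=d. -/

import Mathlib

namespace PluralCuts

/-- The two horizontal directions: west and east. -/
inductive XDir : Type
  | W
  | E
deriving DecidableEq

/-- The two vertical directions: north and south. -/
inductive YDir : Type
  | N
  | S
deriving DecidableEq

/-- The other element of `{W, E}`. -/
def XDir.other : XDir → XDir
  | .W => .E
  | .E => .W

/-- A helper choosing between two values according to an `XDir`. -/
def pick {α : Type*} (w e : α) : XDir → α
  | .W => w
  | .E => e

/-- A digraph on (a finite set of) natural-number vertices: a finite set of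
vertices together with a finite set of edges (ordered pairs). -/
structure DG : Type where
  verts : Finset ℕ
  edges : Finset (ℕ × ℕ)

namespace DG

/-- `D` is an oriented graph: edges lie between vertices, the edge relation is
irreflexive and antisymmetric, and the vertex set is nonempty. -/
def IsOriented (D : DG) : Prop :=
  (∀ e ∈ D.edges, e.1 ∈ D.verts ∧ e.2 ∈ D.verts) ∧
  (∀ e ∈ D.edges, e.1 ≠ e.2) ∧
  (∀ a b : ℕ, (a, b) ∈ D.edges → (b, a) ∉ D.edges) ∧
  D.verts.Nonempty

/-- A `W`-vertex: no edge ends in it. -/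
def isWVert (D : DG) (a : ℕ) : Prop := a ∈ D.verts ∧ ∀ b, (b, a) ∉ D.edges

/-- An `E`-vertex: no edge begins in it. -/
def isEVert (D : DG) (a : ℕ) : Prop := a ∈ D.verts ∧ ∀ b, (a, b) ∉ D.edges

/-- An inner vertex: some edge ends in it and some edge begins in it. -/
def isInner (D : DG) (a : ℕ) : Prop :=
  a ∈ D.verts ∧ (∃ b, (b, a) ∈ D.edges) ∧ (∃ b, (a, b) ∈ D.edges)

/-- A `W`-edge: an edge beginning in a `W`-vertex. -/
def isWEdge (D : DG) (e : ℕ × ℕ) : Prop := e ∈ D.edges ∧ D.isWVert e.1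

/-- An `E`-edge: an edge ending in an `E`-vertex. -/
def isEEdge (D : DG) (e : ℕ × ℕ) : Prop := e ∈ D.edges ∧ D.isEVert e.2

/-- An `X`-edge, for `X ∈ {W, E}`. -/
def isXEdge (D : DG) : XDir → (ℕ × ℕ) → Prop
  | .W => D.isWEdge
  | .E => D.isEEdge

/-- An inner edge: it begins and ends in inner vertices. -/
def isInnerEdge (D : DG) (e : ℕ × ℕ) : Prop :=
  e ∈ D.edges ∧ D.isInner e.1 ∧ D.isInner e.2

/-- A functional `W`-edge `(a,b)`: `(a,c) ∈ D` implies `b = c`. -/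
def funcWEdge (D : DG) (e : ℕ × ℕ) : Prop :=
  D.isWEdge e ∧ ∀ c, (e.1, c) ∈ D.edges → c = e.2

/-- A functional `E`-edge `(b,a)`: `(c,a) ∈ D` implies `b = c`. -/
def funcEEdge (D : DG) (e : ℕ × ℕ) : Prop :=
  D.isEEdge e ∧ ∀ c, (c, e.2) ∈ D.edges → c = e.1

/-- `D` is `W`-`E`-functional: all its `W`-edges and `E`-edges are functional. -/
def WEFunctional (D : DG) : Prop :=
  (∀ e, D.isWEdge e → D.funcWEdge e) ∧ (∀ e, D.isEEdge e → D.funcEEdge e)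

/-- Semi-adjacency: `(a,b)` or `(b,a)` is an edge. -/
def semiAdj (D : DG) (a b : ℕ) : Prop := (a, b) ∈ D.edges ∨ (b, a) ∈ D.edges

/-- A semipath: a nonempty sequence of mutually distinct vertices in which any
two consecutive vertices are semi-adjacent. -/
def IsSemipath (D : DG) (l : List ℕ) : Prop :=
  l ≠ [] ∧ (∀ a ∈ l, a ∈ D.verts) ∧ l.Nodup ∧ l.Chain' D.semiAdj

/-- A path: a nonempty sequence of mutually distinct vertices in which
`(a_i, a_{i+1})` is an edge for consecutive vertices. -/
def IsPath (D : DG) (l : List ℕ) : Prop :=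
  l ≠ [] ∧ (∀ a ∈ l, a ∈ D.verts) ∧ l.Nodup ∧
    l.Chain' (fun a b => (a, b) ∈ D.edges)

/-- A semicycle: a sequence `a_1, ..., a_n` of vertices with `n ≥ 4`,
`a_1 = a_n`, `a_1, ..., a_{n-1}` mutually distinct, and consecutive vertices
semi-adjacent. -/
def IsSemicycle (D : DG) (l : List ℕ) : Prop :=
  4 ≤ l.length ∧ (∀ a ∈ l, a ∈ D.verts) ∧ l.head? = l.getLast? ∧
  l.dropLast.Nodup ∧ l.Chain' D.semiAdj

/-- `D` is weakly connected: every two vertices are joined by a semipath. -/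
def WeaklyConnected (D : DG) : Prop :=
  ∀ a ∈ D.verts, ∀ b ∈ D.verts,
    ∃ l, D.IsSemipath l ∧ l.head? = some a ∧ l.getLast? = some b

/-- `D` is asemicyclic: it has no semicycles. -/
def Asemicyclic (D : DG) : Prop := ∀ l, ¬ D.IsSemicycle l

/-- The cut `D_W[e_W - e_E]D_E`:
`(D_W - {e_W}) ∪ (D_E - {e_E}) ∪ {(e_W.1, e_E.2)}` on the union of the vertex
sets with `e_W.2` and `e_E.1` omitted. -/
def cut (DW DE : DG) (eW eE : ℕ × ℕ) : DG where
  verts := (DW.verts ∪ DE.verts) \ {eW.2, eE.1}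
  edges := insert (eW.1, eE.2) ((DW.edges.erase eW) ∪ (DE.edges.erase eE))

end DG

/-- The type of assignments of four distinguished edges `NW, SW, NE, SE`. -/
abbrev DistE : Type := YDir → XDir → ℕ × ℕ

/-- The type of labellings assigning to (inner) vertices four edges. -/
abbrev Lab : Type := ℕ → YDir → XDir → ℕ × ℕ

/-- `⟨D, ε⟩` is a basic K-graph: `D` is an oriented graph with a single inner
vertex `b`, all edges begin or end in `b`, every other vertex is joined to `b`
by an edge, there is at least one edge ending in `b` and one beginning in `b`,
the distinguished edges `ε Y W` end in `b` and `ε Y E` begin in `b`, and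
(XYB): if there are at least two `X`-edges then `NX ≠ SX`. -/
def IsBasicK (D : DG) (ε : DistE) : Prop :=
  D.IsOriented ∧
  ∃ b ∈ D.verts,
    (∀ e ∈ D.edges, e.1 = b ∨ e.2 = b) ∧
    (∀ v ∈ D.verts, v = b ∨ (v, b) ∈ D.edges ∨ (b, v) ∈ D.edges) ∧
    (∃ a, (a, b) ∈ D.edges) ∧ (∃ c, (b, c) ∈ D.edges) ∧
    (∀ Y : YDir, ε Y XDir.W ∈ D.edges ∧ (ε Y XDir.W).2 = b ∧
      ε Y XDir.E ∈ D.edges ∧ (ε Y XDir.E).1 = b) ∧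
    (2 ≤ (D.edges.filter (fun e => e.2 = b)).card →
      ε YDir.N XDir.W ≠ ε YDir.S XDir.W) ∧
    (2 ≤ (D.edges.filter (fun e => e.1 = b)).card →
      ε YDir.N XDir.E ≠ ε YDir.S XDir.E)

/-- `⟨D, ε⟩` is a basic Q-graph: as a basic K-graph but with no requirement
(XYB) on the distinguished edges. -/
def IsBasicQ (D : DG) (ε : DistE) : Prop :=
  D.IsOriented ∧
  ∃ b ∈ D.verts,
    (∀ e ∈ D.edges, e.1 = b ∨ e.2 = b) ∧
    (∀ v ∈ D.verts, v = b ∨ (v, b) ∈ D.edges ∨ (b, v) ∈ D.edges) ∧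
    (∃ a, (a, b) ∈ D.edges) ∧ (∃ c, (b, c) ∈ D.edges) ∧
    (∀ Y : YDir, ε Y XDir.W ∈ D.edges ∧ (ε Y XDir.W).2 = b ∧
      ε Y XDir.E ∈ D.edges ∧ (ε Y XDir.E).1 = b)

/-- Finite binary trees whose nodes carry an oriented graph, four
distinguished edges, and (at internal nodes) the two cut edges. -/
inductive CTree : Type
  | leaf (D : DG) (ε : DistE)
  | node (D : DG) (ε : DistE) (eW eE : ℕ × ℕ) (l r : CTree)

namespace CTree

/-- The graph at the root of the tree. -/
def rootGraph : CTree → DG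
  | .leaf D _ => D
  | .node D _ _ _ _ _ => D

/-- The distinguished edges at the root of the tree. -/
def dist : CTree → DistE
  | .leaf _ ε => ε
  | .node _ ε _ _ _ _ => ε

/-- The list of graphs-with-distinguished-edges at the leaves of the tree
(the basic K-graphs determining the leaves of a construction). -/
def leaves : CTree → List (DG × DistE)
  | .leaf D ε => [(D, ε)]
  | .node _ _ _ _ l r => l.leaves ++ r.leaves

end CTree

/-- The tree `G_W[e_W - e_E]G_E`, whose root graph is the cut of the root
graphs and whose distinguished edges are given by (XYD). -/
def mkNode (GW GE : CTree) (eW eE : ℕ × ℕ) : CTree :=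
  .node (DG.cut GW.rootGraph GE.rootGraph eW eE)
    (fun Y X =>
      match X with
      | .W => if eE = GE.dist Y XDir.W then GW.dist Y XDir.W else GE.dist Y XDir.W
      | .E => if eW = GW.dist Y XDir.E then GE.dist Y XDir.E else GW.dist Y XDir.E)
    eW eE GW GE

/-- The inductive notion of construction (of a global K-graph). -/
inductive IsConstruction : CTree → Prop
  | leaf (D : DG) (ε : DistE) (h : IsBasicK D ε) : IsConstruction (.leaf D ε)
  | node (D : DG) (ε : DistE) (eW eE : ℕ × ℕ) (GW GE : CTree)
      (hW : IsConstruction GW) (hE : IsConstruction GE)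
      (hdisj : Disjoint GW.rootGraph.verts GE.rootGraph.verts)
      (heW : GW.rootGraph.funcEEdge eW)
      (heE : GE.rootGraph.funcWEdge eE)
      (hD : D = DG.cut GW.rootGraph GE.rootGraph eW eE)
      (hXYC : ∀ Y : YDir, eW = GW.dist Y XDir.E ∨ eE = GE.dist Y XDir.W)
      (hεW : ∀ Y : YDir, ε Y XDir.W =
        if eE = GE.dist Y XDir.W then GW.dist Y XDir.W else GE.dist Y XDir.W)
      (hεE : ∀ Y : YDir, ε Y XDir.E =
        if eW = GW.dist Y XDir.E then GE.dist Y XDir.E else GW.dist Y XDir.E) :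
      IsConstruction (.node D ε eW eE GW GE)

/-- The inductive notion of construction of a global Q-graph: as
`IsConstruction` but with basic Q-graphs at the leaves. -/
inductive IsConstructionQ : CTree → Prop
  | leaf (D : DG) (ε : DistE) (h : IsBasicQ D ε) : IsConstructionQ (.leaf D ε)
  | node (D : DG) (ε : DistE) (eW eE : ℕ × ℕ) (GW GE : CTree)
      (hW : IsConstructionQ GW) (hE : IsConstructionQ GE)
      (hdisj : Disjoint GW.rootGraph.verts GE.rootGraph.verts)
      (heW : GW.rootGraph.funcEEdge eW)
      (heE : GE.rootGraph.funcWEdge eE)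
      (hD : D = DG.cut GW.rootGraph GE.rootGraph eW eE)
      (hXYC : ∀ Y : YDir, eW = GW.dist Y XDir.E ∨ eE = GE.dist Y XDir.W)
      (hεW : ∀ Y : YDir, ε Y XDir.W =
        if eE = GE.dist Y XDir.W then GW.dist Y XDir.W else GE.dist Y XDir.W)
      (hεE : ∀ Y : YDir, ε Y XDir.E =
        if eW = GW.dist Y XDir.E then GE.dist Y XDir.E else GW.dist Y XDir.E) :
      IsConstructionQ (.node D ε eW eE GW GE)

/-- ρ-equivalence of constructions: the least equivalence relation containing
ρ1, ρ2, ρ3 and closed under congruence with respect to cuts. -/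
inductive RhoEquiv : CTree → CTree → Prop
  | rho1 (P Q R : CTree) (eW eE fW fE : ℕ × ℕ)
      (hP : IsConstruction P) (hQ : IsConstruction Q) (hR : IsConstruction R)
      (heW : P.rootGraph.isEEdge eW) (hfW : Q.rootGraph.isEEdge fW)
      (heE : Q.rootGraph.isWEdge eE) (hfE : R.rootGraph.isWEdge fE)
      (h1 : IsConstruction (mkNode (mkNode P Q eW eE) R fW fE))
      (h2 : IsConstruction (mkNode P (mkNode Q R fW fE) eW eE)) :
      RhoEquiv (mkNode (mkNode P Q eW eE) R fW fE)
               (mkNode P (mkNode Q R fW fE) eW eE)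
  | rho2 (P Q R : CTree) (eW eE fW fE : ℕ × ℕ)
      (hP : IsConstruction P) (hQ : IsConstruction Q) (hR : IsConstruction R)
      (heW : P.rootGraph.isEEdge eW) (hfW : P.rootGraph.isEEdge fW)
      (hne : eW ≠ fW)
      (heE : Q.rootGraph.isWEdge eE) (hfE : R.rootGraph.isWEdge fE)
      (h1 : IsConstruction (mkNode (mkNode P Q eW eE) R fW fE))
      (h2 : IsConstruction (mkNode (mkNode P R fW fE) Q eW eE)) :
      RhoEquiv (mkNode (mkNode P Q eW eE) R fW fE)
               (mkNode (mkNode P R fW fE) Q eW eE)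
  | rho3 (P Q R : CTree) (eW eE fW fE : ℕ × ℕ)
      (hP : IsConstruction P) (hQ : IsConstruction Q) (hR : IsConstruction R)
      (heE : P.rootGraph.isWEdge eE) (hfE : P.rootGraph.isWEdge fE)
      (hne : eE ≠ fE)
      (heW : Q.rootGraph.isEEdge eW) (hfW : R.rootGraph.isEEdge fW)
      (h1 : IsConstruction (mkNode R (mkNode Q P eW eE) fW fE))
      (h2 : IsConstruction (mkNode Q (mkNode R P fW fE) eW eE)) :
      RhoEquiv (mkNode R (mkNode Q P eW eE) fW fE)
               (mkNode Q (mkNode R P fW fE) eW eE)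
  | congr (G1 G2 H1 H2 : CTree) (eW eE : ℕ × ℕ)
      (h12 : RhoEquiv G1 G2) (h34 : RhoEquiv H1 H2)
      (hc1 : IsConstruction (mkNode G1 H1 eW eE))
      (hc2 : IsConstruction (mkNode G2 H2 eW eE)) :
      RhoEquiv (mkNode G1 H1 eW eE) (mkNode G2 H2 eW eE)
  | refl (G : CTree) (h : IsConstruction G) : RhoEquiv G G
  | symm {G H : CTree} (h : RhoEquiv G H) : RhoEquiv H G
  | trans {G H K : CTree} (h1 : RhoEquiv G H) (h2 : RhoEquiv H K) :
      RhoEquiv G K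

/-- The class `[G]`: all constructions with the same root graph as `G` whose
leaves are determined by the same basic K-graphs as those of `G`. -/
def classOf (G : CTree) : Set CTree :=
  {H | IsConstruction H ∧ H.rootGraph = G.rootGraph ∧
    ∀ p : DG × DistE, p ∈ H.leaves ↔ p ∈ G.leaves}

/-- Renaming the vertices of a digraph along a function. -/
def DG.rename (f : ℕ → ℕ) (D : DG) : DG where
  verts := D.verts.image f
  edges := D.edges.image (fun e => (f e.1, f e.2))

/-- Renaming the vertices throughout a tree. -/
def CTree.rename (f : ℕ → ℕ) : CTree → CTree
  | .leaf D ε => .leaf (DG.rename f D) (fun Y X => (f (ε Y X).1, f (ε Y X).2))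
  | .node D ε eW eE l r =>
      .node (DG.rename f D) (fun Y X => (f (ε Y X).1, f (ε Y X).2))
        (f eW.1, f eW.2) (f eE.1, f eE.2) (l.rename f) (r.rename f)

/-- σ-equivalence: `H` is obtained from `G` by a bijective renaming of
vertices that fixes the root vertices (so only secondary vertices may be
renamed). -/
def SigmaEquiv (G H : CTree) : Prop :=
  ∃ f : ℕ ≃ ℕ, (∀ v ∈ G.rootGraph.verts, f v = v) ∧ H = G.rename f

/-- The global compass graph `‖G‖`: all constructions σ-equivalent to a
construction in `[G]`. -/
def normClass (G : CTree) : Set CTree :=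
  {H | ∃ K ∈ classOf G, SigmaEquiv K H}

/-- The labelling `L` of `λ(G) = ⟨D, L⟩`, defined by induction on `G`: at a
leaf given by a basic K-graph with inner vertex `b`, `YX(b) = YX(B)`; at a
node, the value is inherited from the appropriate subtree unless it is one of
the two cut edges, in which case it is the new edge introduced by the cut. -/
def lamG : CTree → Lab
  | .leaf _ ε => fun _ => ε
  | .node _ _ eW eE l r => fun a Y X =>
      let v := if a ∈ l.rootGraph.verts then lamG l a Y X else lamG r a Y X
      if v = eW ∨ v = eE then (eW.1, eE.2) else v

/-- `L` assigns to every inner vertex `a` edges `L a Y W` ending in `a` and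
edges `L a Y E` beginning in `a`. -/
def ProperLab (D : DG) (L : Lab) : Prop :=
  ∀ a, D.isInner a → ∀ Y : YDir,
    L a Y XDir.W ∈ D.edges ∧ (L a Y XDir.W).2 = a ∧
    L a Y XDir.E ∈ D.edges ∧ (L a Y XDir.E).1 = a

/-- `⟨D, L⟩` separates `N` from `S`. -/
def SeparatesNS (D : DG) (L : Lab) : Prop :=
  ∀ a, D.isInner a →
    (2 ≤ (D.edges.filter (fun e => e.2 = a)).card →
      L a YDir.N XDir.W ≠ L a YDir.S XDir.W) ∧
    (2 ≤ (D.edges.filter (fun e => e.1 = a)).card →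
      L a YDir.N XDir.E ≠ L a YDir.S XDir.E)

/-- A list `a_1, ..., a_n` is `Y`-decent in `⟨D, L⟩`: `n = 1`, or
`YE(a_1) = (a_1, a_2)`, or `YW(a_n) = (a_{n-1}, a_n)`. -/
def Ydecent (L : Lab) (Y : YDir) (l : List ℕ) : Prop :=
  ∀ a b t, l = a :: b :: t →
    (L a Y XDir.E = (a, b) ∨
      ∃ c d t', l.reverse = d :: c :: t' ∧ L d Y XDir.W = (c, d))

/-- `⟨D, L⟩` is a local compass graph. -/
def IsLocalCompass (D : DG) (L : Lab) : Prop :=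
  D.IsOriented ∧ ProperLab D L ∧
  D.WeaklyConnected ∧ D.Asemicyclic ∧ D.WEFunctional ∧ (∃ a, D.isInner a) ∧
  SeparatesNS D L ∧
  (∀ l, D.IsPath l → Ydecent L YDir.N l ∧ Ydecent L YDir.S l)

/-- A path (list) covers an edge `g` when `g` is a pair of consecutive
vertices of the list. -/
def covers (l : List ℕ) (g : ℕ × ℕ) : Prop := g ∈ l.zip l.tail

/-- A `YX`-edge in `⟨D, L⟩`. -/
def YXedge (D : DG) (L : Lab) (Y : YDir) : XDir → (ℕ × ℕ) → Prop
  | .W, g => g ∈ D.edges ∧ (L g.2 Y XDir.W = g ∨ D.isEEdge g)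
  | .E, g => g ∈ D.edges ∧ (L g.1 Y XDir.E = g ∨ D.isWEdge g)

/-- A proper semipath: a semipath such that neither it nor its reverse is a
path. -/
def ProperSemipath (D : DG) (l : List ℕ) : Prop :=
  D.IsSemipath l ∧ ¬ D.IsPath l ∧ ¬ D.IsPath l.reverse

/-- A transversal edge `(a,b)`: there is a proper semipath beginning with
`a, b` and a proper semipath beginning with `b, a`. -/
def Transversal (D : DG) (e : ℕ × ℕ) : Prop :=
  e ∈ D.edges ∧
  (∃ t, ProperSemipath D (e.1 :: e.2 :: t)) ∧
  (∃ t, ProperSemipath D (e.2 :: e.1 :: t))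

/-- The edge of `D` that connects two semi-adjacent vertices `a` and `b`. -/
def connEdge (D : DG) (a b : ℕ) : ℕ × ℕ :=
  if (a, b) ∈ D.edges then (a, b) else (b, a)

/-- The connecting edges of a list: the edges connecting its consecutive
vertices. -/
def connEdges (D : DG) (l : List ℕ) (e : ℕ × ℕ) : Prop :=
  ∃ p ∈ l.zip l.tail, e = connEdge D p.1 p.2

/-- A bifurcation: three distinct edges with a common vertex. -/
def Bifurcation (D : DG) (e1 e2 e3 : ℕ × ℕ) : Prop :=
  e1 ∈ D.edges ∧ e2 ∈ D.edges ∧ e3 ∈ D.edges ∧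
  e1 ≠ e2 ∧ e1 ≠ e3 ∧ e2 ≠ e3 ∧
  ∃ v, (v = e1.1 ∨ v = e1.2) ∧ (v = e2.1 ∨ v = e2.2) ∧ (v = e3.1 ∨ v = e3.2)

/-- A K-graph: a weakly connected, asemicyclic, `W`-`E`-functional oriented
graph with an inner vertex in which no bifurcation is transversal. -/
def IsKGraph (D : DG) : Prop :=
  D.IsOriented ∧ D.WeaklyConnected ∧ D.Asemicyclic ∧ D.WEFunctional ∧
  (∃ a, D.isInner a) ∧
  ∀ e1 e2 e3, Bifurcation D e1 e2 e3 →
    ¬ (Transversal D e1 ∧ Transversal D e2 ∧ Transversal D e3)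

/-- A Q-graph: a weakly connected, asemicyclic, `W`-`E`-functional oriented
graph with an inner vertex. -/
def IsQGraph (D : DG) : Prop :=
  D.IsOriented ∧ D.WeaklyConnected ∧ D.Asemicyclic ∧ D.WEFunctional ∧
  ∃ a, D.isInner a

/-!
Induction on the number of edges. If `D` has no inner edge, its inner vertex `b` is unique and
every other vertex has `b` as its only neighbour, so `D` is a basic Q-graph and `d` can fill both
`X`-slots of a one-leaf construction. Otherwise cut `D` at an inner edge `(a, c)`: the weak
components of `a` and of `c` in `D - (a, c)`, completed by new edges `(a, b)` and `(b', c)` at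
fresh vertices, are smaller Q-graphs `D_W`, `D_E` with `D = D_W[(a,b)-(b',c)]D_E`. The edge `d`
lies in one half; build there a construction with `NX = SX = d`, and in the other half one whose
two slots facing the cut hold the new edge. Then (XYC) holds and (XYD) hands `d` up to the root.
-/

namespace DG

attribute [ext] DG

variable {D G H : DG} {l : List ℕ} {S : Finset ℕ} {p q r u v w x y : ℕ} {e e' f : ℕ × ℕ}

lemma semiAdj.symm (h : D.semiAdj x y) : D.semiAdj y x := Or.symm h

def Joined (D : DG) (u v : ℕ) : Prop :=
  ∃ l, D.IsSemipath l ∧ l.head? = some u ∧ l.getLast? = some v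

lemma IsSemipath.mono (hl : G.IsSemipath l) (hv : ∀ x ∈ l, x ∈ H.verts)
    (hadj : ∀ x ∈ l, ∀ y ∈ l, G.semiAdj x y → H.semiAdj x y) : H.IsSemipath l :=
  ⟨hl.1, hv, hl.2.2.1, List.IsChain.imp_of_mem_imp (fun a b ha hb => hadj a ha b hb) hl.2.2.2⟩

lemma IsSemicycle.mono (hl : G.IsSemicycle l) (hv : ∀ x ∈ l, x ∈ H.verts)
    (hadj : ∀ x ∈ l, ∀ y ∈ l, G.semiAdj x y → H.semiAdj x y) : H.IsSemicycle l :=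
  ⟨hl.1, hv, hl.2.2.1, hl.2.2.2.1,
    List.IsChain.imp_of_mem_imp (fun a b ha hb => hadj a ha b hb) hl.2.2.2.2⟩

lemma IsSemipath.semiAdj_head {t : List ℕ} (hl : D.IsSemipath (x :: y :: t)) :
    D.semiAdj x y :=
  (List.isChain_cons_cons.1 hl.2.2.2).1

lemma IsSemipath.of_cons {t : List ℕ} (hl : D.IsSemipath (x :: y :: t)) :
    D.IsSemipath (y :: t) :=
  ⟨List.cons_ne_nil _ _, fun z hz => hl.2.1 z (List.mem_cons_of_mem _ hz), hl.2.2.1.of_cons,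
    (List.isChain_cons_cons.1 hl.2.2.2).2⟩

lemma IsSemipath.cons {t : List ℕ} (hl : D.IsSemipath (y :: t)) (hx : x ∈ D.verts)
    (hxl : x ∉ y :: t) (hxy : D.semiAdj x y) : D.IsSemipath (x :: y :: t) :=
  ⟨List.cons_ne_nil _ _, List.forall_mem_cons.2 ⟨hx, hl.2.1⟩, List.nodup_cons.2 ⟨hxl, hl.2.2.1⟩,
    List.isChain_cons_cons.2 ⟨hxy, hl.2.2.2⟩⟩

lemma Joined.refl (hu : u ∈ D.verts) : D.Joined u u :=
  ⟨[u], ⟨List.cons_ne_nil _ _, by simpa, List.nodup_singleton u, List.isChain_singleton u⟩,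
    rfl, rfl⟩

lemma Joined.right_mem (h : D.Joined u v) : v ∈ D.verts := by
  obtain ⟨l, hl, -, hg⟩ := h
  exact hl.2.1 v (List.mem_of_getLast? hg)

lemma Joined.symm (h : D.Joined u v) : D.Joined v u := by
  obtain ⟨l, ⟨hne, hv, hnd, hch⟩, hh, hg⟩ := h
  refine ⟨l.reverse, ⟨by simpa, by simpa, List.nodup_reverse.2 hnd, ?_⟩, by simpa, by simpa⟩
  exact List.isChain_reverse.2 (hch.imp fun _ _ h => semiAdj.symm h)

lemma Joined.cons (hu : u ∈ D.verts) (hux : D.semiAdj u x) (h : D.Joined x w) :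
    D.Joined u w := by
  obtain ⟨l, hl, hh, hg⟩ := h
  by_cases hul : u ∈ l
  · obtain ⟨s, t, rfl⟩ := List.append_of_mem hul
    have hsuf : u :: t <:+ s ++ u :: t := List.suffix_append s _
    refine ⟨u :: t, ⟨List.cons_ne_nil _ _, fun y hy => hl.2.1 y (hsuf.subset hy),
      hl.2.2.1.sublist hsuf.sublist, hl.2.2.2.suffix hsuf⟩, rfl, ?_⟩
    rwa [List.getLast?_append_of_ne_nil _ (List.cons_ne_nil _ _)] at hg
  · obtain ⟨y, t, rfl⟩ := List.exists_cons_of_ne_nil hl.1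
    obtain rfl : y = x := by simpa using hh
    exact ⟨u :: y :: t, hl.cons hu hul hux, rfl, by rwa [List.getLast?_cons_cons]⟩

lemma Joined.trans (h₁ : D.Joined u v) (h₂ : D.Joined v w) : D.Joined u w := by
  obtain ⟨l, hl, hh, hg⟩ := h₁
  induction l generalizing u with
  | nil => exact absurd rfl hl.1
  | cons x t ih =>
    obtain rfl : x = u := by simpa using hh
    cases t with
    | nil =>
      obtain rfl : x = v := by simpa using hg
      exact h₂
    | cons y t =>
      exact .cons (hl.2.1 x (by simp)) hl.semiAdj_head
        (ih hl.of_cons rfl (by rwa [List.getLast?_cons_cons] at hg))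

lemma Joined.snoc (h : D.Joined u x) (hw : w ∈ D.verts) (hxw : D.semiAdj x w) :
    D.Joined u w :=
  h.trans (.cons h.right_mem hxw (.refl hw))

lemma IsSemipath.joined_of_mem (hl : D.IsSemipath l) (hh : l.head? = some u) (hx : x ∈ l) :
    D.Joined u x := by
  obtain ⟨s, t, rfl⟩ := List.append_of_mem hx
  have hpre : s ++ [x] <+: s ++ x :: t := ⟨t, by simp⟩
  refine ⟨s ++ [x], ⟨by simp, fun y hy => hl.2.1 y (hpre.subset hy),
    hl.2.2.1.sublist hpre.sublist, hl.2.2.2.prefix hpre⟩, ?_, by simp⟩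
  rw [← hh]
  cases s <;> simp

lemma Joined.exists_cons_cons (h : D.Joined v w) (hvw : v ≠ w) :
    ∃ x t, D.IsSemipath (v :: x :: t) ∧ (v :: x :: t).getLast? = some w := by
  obtain ⟨l, hl, hh, hg⟩ := h
  obtain ⟨v', l', rfl⟩ := List.exists_cons_of_ne_nil hl.1
  obtain rfl : v' = v := by simpa using hh
  obtain ⟨x, t, rfl⟩ := List.exists_cons_of_ne_nil (l := l') (by rintro rfl; simp_all)
  exact ⟨x, t, hl, hg⟩

lemma weaklyConnected_of_forall_joined {r : ℕ} (h : ∀ v ∈ D.verts, D.Joined r v) :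
    D.WeaklyConnected :=
  fun u hu v hv => (h u hu).symm.trans (h v hv)

lemma IsSemicycle.exists_semiAdj_ne (hl : D.IsSemicycle l) (hv : v ∈ l) :
    ∃ x y, x ≠ y ∧ D.semiAdj v x ∧ D.semiAdj v y := by
  obtain ⟨hlen, -, hcyc, hnd, hch⟩ := hl
  have hidx : ∀ i j (hij : i = j) (hi : i < l.length) (hj : j < l.length), l[i] = l[j] := by
    intros; subst_vars; rfl
  have hinj : ∀ i j (hi : i < l.length - 1) (hj : j < l.length - 1), l[i] = l[j] → i = j :=
    fun i j hi hj h => (hnd.getElem_inj_iff (i := i) (j := j) (hi := by simpa)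
      (hj := by simpa)).1 (by simpa using h)
  have hends : l[0] = l[l.length - 1] := by
    rw [List.head?_eq_getElem?, List.getLast?_eq_getElem?, List.getElem?_eq_getElem (by omega),
      List.getElem?_eq_getElem (by omega)] at hcyc
    exact Option.some.inj hcyc
  obtain ⟨i, hi, rfl⟩ : ∃ i, ∃ hi : i < l.length - 1, l[i] = v := by
    obtain ⟨i, hi, rfl⟩ := List.mem_iff_getElem.1 hv
    by_cases h : i < l.length - 1
    · exact ⟨i, h, rfl⟩
    · exact ⟨0, by omega, hends.trans (hidx _ _ (by omega) _ _)⟩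
  cases i with
  | zero =>
    refine ⟨l[1], l[l.length - 2], fun h => ?_, hch.getElem 0 (by omega), ?_⟩
    · have := hinj _ _ (by omega) (by omega) h
      omega
    · rw [hends, ← hidx (l.length - 2 + 1) _ (by omega) (by omega) (by omega)]
      exact (hch.getElem _ (by omega)).symm
  | succ i =>
    refine ⟨l[i], l[i + 2], fun h => ?_, (hch.getElem i (by omega)).symm,
      hch.getElem (i + 1) (by omega)⟩
    by_cases hlast : i + 2 < l.length - 1
    · have := hinj _ _ (by omega) hlast h
      omega
    · have := hinj i 0 (by omega) (by omega)
        (h.trans ((hidx _ _ (by omega) _ _).trans hends.symm))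
      omega

lemma IsSemipath.isSemicycle_append (hl : D.IsSemipath l) (hlen : 3 ≤ l.length)
    (hh : l.head? = some u) (hg : l.getLast? = some v) (hvu : D.semiAdj v u) :
    D.IsSemicycle (l ++ [u]) := by
  refine ⟨by simp; omega, ?_, by simp [List.head?_append, hh], by simpa using hl.2.2.1, ?_⟩
  · exact List.forall_mem_append.2 ⟨hl.2.1, by simpa using hl.2.1 u (List.mem_of_mem_head? hh)⟩
  · exact List.isChain_append.2 ⟨hl.2.2.2, List.isChain_singleton u, by simpa [hg] using hvu⟩

lemma isXEdge.mem {X : XDir} {d : ℕ × ℕ} (hd : D.isXEdge X d) : d ∈ D.edges := by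
  cases X <;> exact hd.1

lemma isInner_of_semiAdj_of_ne (hD : D.WEFunctional) (hx : x ∈ D.verts)
    (hu : D.semiAdj x u) (hw : D.semiAdj x w) (huw : u ≠ w) : D.isInner x := by
  refine ⟨hx, ?_, ?_⟩
  · by_contra! hin
    have hxu := hu.resolve_right (hin u)
    exact huw ((hD.1 _ ⟨hxu, hx, hin⟩).2 w (hw.resolve_right (hin w))).symm
  · by_contra! hout
    have hux := hu.resolve_left (hout u)
    exact huw ((hD.2 _ ⟨hux, hx, hout⟩).2 w (hw.resolve_left (hout w))).symm

def eraseEdge (D : DG) (f : ℕ × ℕ) : DG := ⟨D.verts, D.edges.erase f⟩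

noncomputable def component (D : DG) (r : ℕ) : Finset ℕ := by
  classical exact D.verts.filter (D.Joined r)

def piece (G : DG) (S : Finset ℕ) (q : ℕ) (e : ℕ × ℕ) : DG :=
  ⟨insert q S, insert e (G.edges.filter fun e' => e'.1 ∈ S ∧ e'.2 ∈ S)⟩

lemma mem_component : v ∈ D.component r ↔ D.Joined r v := by
  classical
  rw [component, Finset.mem_filter]
  exact ⟨And.right, fun h => ⟨h.right_mem, h⟩⟩

lemma component_subset : D.component r ⊆ D.verts := fun _ hv => (mem_component.1 hv).right_mem

lemma notMem_component_eraseEdge (hq : q ∉ D.verts) : q ∉ (D.eraseEdge f).component r :=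
  fun h => hq (component_subset (D := D.eraseEdge f) h)

lemma mem_component_iff_of_mem_edges (hD : D.IsOriented) (he : e ∈ D.edges) :
    e.1 ∈ D.component r ↔ e.2 ∈ D.component r := by
  simp only [mem_component]
  exact ⟨fun h => h.snoc (hD.1 e he).2 (.inl he), fun h => h.snoc (hD.1 e he).1 (.inr he)⟩

lemma semiAdj_of_semiAdj_eraseEdge (h : (D.eraseEdge f).semiAdj x v) : D.semiAdj x v :=
  h.imp Finset.mem_of_mem_erase Finset.mem_of_mem_erase

lemma semiAdj_eraseEdge (h : D.semiAdj x v) (hxv : (x, v) ≠ f) (hvx : (v, x) ≠ f) :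
    (D.eraseEdge f).semiAdj x v :=
  h.imp (Finset.mem_erase.2 ⟨hxv, ·⟩) (Finset.mem_erase.2 ⟨hvx, ·⟩)

lemma IsOriented.eraseEdge (hD : D.IsOriented) : (D.eraseEdge f).IsOriented :=
  ⟨fun e he => hD.1 e (Finset.mem_of_mem_erase he),
    fun e he => hD.2.1 e (Finset.mem_of_mem_erase he),
    fun a b h₁ h₂ => hD.2.2.1 a b (Finset.mem_of_mem_erase h₁) (Finset.mem_of_mem_erase h₂),
    hD.2.2.2⟩

lemma Asemicyclic.eraseEdge (hD : D.Asemicyclic) : (D.eraseEdge f).Asemicyclic :=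
  fun l hl => hD l (hl.mono hl.2.1 fun _ _ _ _ h => semiAdj_of_semiAdj_eraseEdge h)

lemma mem_piece_edges :
    e' ∈ (G.piece S q e).edges ↔ e' = e ∨ e' ∈ G.edges ∧ e'.1 ∈ S ∧ e'.2 ∈ S := by
  simp [piece]

lemma eq_of_mem_piece_edges (hq : q ∉ S) (he' : e' ∈ (G.piece S q e).edges)
    (hqe : e'.1 = q ∨ e'.2 = q) : e' = e := by
  rcases mem_piece_edges.1 he' with h | ⟨-, h₁, h₂⟩
  · exact h
  · rcases hqe with rfl | rfl <;> contradiction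

lemma eq_of_semiAdj_piece (hq : q ∉ S) (he : e = (p, q) ∨ e = (q, p))
    (h : (G.piece S q e).semiAdj q x) : x = p := by
  rcases h with h | h
  · have := eq_of_mem_piece_edges hq h (.inl rfl)
    rcases he with rfl | rfl <;> simp_all
  · have := eq_of_mem_piece_edges hq h (.inr rfl)
    rcases he with rfl | rfl <;> simp_all

lemma semiAdj_of_semiAdj_piece (he : e = (p, q) ∨ e = (q, p))
    (h : (G.piece S q e).semiAdj x v) (hx : x ≠ q) (hv : v ≠ q) : G.semiAdj x v := by
  have key : ∀ {e'}, e' ∈ (G.piece S q e).edges → e'.1 ≠ q → e'.2 ≠ q → e' ∈ G.edges :=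
    fun he' h₁ h₂ => by
      rcases mem_piece_edges.1 he' with rfl | h
      · rcases he with rfl | rfl <;> simp_all
      · exact h.1
  exact h.imp (fun h => key h hx hv) (fun h => key h hv hx)

lemma semiAdj_piece (h : G.semiAdj x v) (hx : x ∈ S) (hv : v ∈ S) :
    (G.piece S q e).semiAdj x v :=
  h.imp (fun h => mem_piece_edges.2 (.inr ⟨h, hx, hv⟩))
    (fun h => mem_piece_edges.2 (.inr ⟨h, hv, hx⟩))

lemma IsOriented.piece (hG : G.IsOriented) (hp : p ∈ S) (hq : q ∉ S)
    (he : e = (p, q) ∨ e = (q, p)) : (G.piece S q e).IsOriented := by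
  have hpq : p ≠ q := fun h => hq (h ▸ hp)
  refine ⟨fun e' he' => ?_, fun e' he' => ?_, fun x y h₁ h₂ => ?_,
    ⟨q, Finset.mem_insert_self _ _⟩⟩
  · rcases mem_piece_edges.1 he' with rfl | ⟨-, h₁, h₂⟩
    · rcases he with rfl | rfl
      · exact ⟨Finset.mem_insert_of_mem hp, Finset.mem_insert_self _ _⟩
      · exact ⟨Finset.mem_insert_self _ _, Finset.mem_insert_of_mem hp⟩
    · exact ⟨Finset.mem_insert_of_mem h₁, Finset.mem_insert_of_mem h₂⟩
  · rcases mem_piece_edges.1 he' with rfl | ⟨h, -⟩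
    · rcases he with rfl | rfl
      exacts [hpq, hpq.symm]
    · exact hG.2.1 e' h
  · rcases mem_piece_edges.1 h₁ with h₁ | ⟨h₁, hx, hy⟩ <;>
      rcases mem_piece_edges.1 h₂ with h₂ | ⟨h₂, hy', hx'⟩
    · rcases he with rfl | rfl <;> simp_all
    · rcases he with rfl | rfl <;> simp_all
    · rcases he with rfl | rfl <;> simp_all
    · exact hG.2.2.1 x y h₁ h₂

lemma Asemicyclic.piece (hG : G.Asemicyclic) (hS : S ⊆ G.verts) (hq : q ∉ S)
    (he : e = (p, q) ∨ e = (q, p)) : (G.piece S q e).Asemicyclic := by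
  intro l hl
  by_cases hql : q ∈ l
  · obtain ⟨x, y, hxy, hx, hy⟩ := hl.exists_semiAdj_ne hql
    exact hxy ((eq_of_semiAdj_piece hq he hx).trans (eq_of_semiAdj_piece hq he hy).symm)
  · have hS' : ∀ x ∈ l, x ∈ S := fun x hx =>
      (Finset.mem_insert.1 (hl.2.1 x hx)).resolve_left fun h => hql (h ▸ hx)
    refine hG l (hl.mono (fun x hx => hS (hS' x hx)) fun x hx y hy h => ?_)
    exact semiAdj_of_semiAdj_piece he h (fun h => hql (h ▸ hx)) (fun h => hql (h ▸ hy))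

lemma weaklyConnected_piece_component (hr : r ∈ G.verts) (hq : q ∉ G.verts)
    (he : e = (r, q) ∨ e = (q, r)) :
    (G.piece (G.component r) q e).WeaklyConnected := by
  have hqe : (G.piece (G.component r) q e).semiAdj q r := by
    rcases he with rfl | rfl
    · exact .inr (Finset.mem_insert_self _ _)
    · exact .inl (Finset.mem_insert_self _ _)
  have hrS : r ∈ G.component r := mem_component.2 (.refl hr)
  refine weaklyConnected_of_forall_joined (r := r) fun v hv => ?_
  rcases Finset.mem_insert.1 hv with rfl | hv
  · exact (Joined.cons hv hqe (.refl (Finset.mem_insert_of_mem hrS))).symm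
  · obtain ⟨l, hl, hh, hg⟩ := mem_component.1 hv
    have hlS : ∀ x ∈ l, x ∈ G.component r := fun x hx => mem_component.2 (hl.joined_of_mem hh hx)
    exact ⟨l, hl.mono (fun x hx => Finset.mem_insert_of_mem (hlS x hx))
      fun x hx y hy h => semiAdj_piece h (hlS x hx) (hlS y hy), hh, hg⟩

lemma funcEEdge_piece (hp : p ∈ S) (hq : q ∉ S) : (G.piece S q (p, q)).funcEEdge (p, q) := by
  have hpq : p ≠ q := fun h => hq (h ▸ hp)
  refine ⟨⟨Finset.mem_insert_self _ _, Finset.mem_insert_self _ _, fun z hz => ?_⟩,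
    fun x hx => ?_⟩
  · simpa using (hpq (Prod.ext_iff.1 (eq_of_mem_piece_edges hq hz (.inl rfl))).1.symm)
  · exact (Prod.ext_iff.1 (eq_of_mem_piece_edges hq hx (.inr rfl))).1

lemma funcWEdge_piece (hp : p ∈ S) (hq : q ∉ S) : (G.piece S q (q, p)).funcWEdge (q, p) := by
  have hpq : p ≠ q := fun h => hq (h ▸ hp)
  refine ⟨⟨Finset.mem_insert_self _ _, Finset.mem_insert_self _ _, fun z hz => ?_⟩,
    fun x hx => ?_⟩
  · simpa using (hpq (Prod.ext_iff.1 (eq_of_mem_piece_edges hq hz (.inr rfl))).2.symm)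
  · exact (Prod.ext_iff.1 (eq_of_mem_piece_edges hq hx (.inl rfl))).2

lemma card_piece_lt {g : ℕ × ℕ} (hf : f ∈ D.edges) (hg : g ∈ D.edges) (hfg : f ≠ g)
    (hgS : ¬ (g.1 ∈ S ∧ g.2 ∈ S)) :
    ((D.eraseEdge f).piece S q e).edges.card < D.edges.card := by
  have hsub : ((D.edges.erase f).filter fun e' => e'.1 ∈ S ∧ e'.2 ∈ S) ⊆
      (D.edges.erase f).erase g := fun e' he' => by
    rw [Finset.mem_filter] at he'
    exact Finset.mem_erase.2 ⟨fun h => hgS (h ▸ he'.2), he'.1⟩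
  have hgf : g ∈ D.edges.erase f := Finset.mem_erase.2 ⟨hfg.symm, hg⟩
  have h₁ := Finset.card_le_card hsub
  have h₂ := Finset.card_insert_le e ((D.edges.erase f).filter fun e' => e'.1 ∈ S ∧ e'.2 ∈ S)
  have h₃ := Finset.card_pos.2 ⟨g, hgf⟩
  rw [Finset.card_erase_of_mem hgf] at h₁
  rw [Finset.card_erase_of_mem hf] at h₁ h₃
  exact lt_of_le_of_lt h₂ (by omega)

lemma mem_piece_component_iff (hD : D.IsOriented) (hv : v ∈ (D.eraseEdge f).component r)
    (hvf : v ≠ f.1 ∧ v ≠ f.2) (hinc : e'.1 = v ∨ e'.2 = v) (hee : e' ≠ e) :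
    e' ∈ ((D.eraseEdge f).piece ((D.eraseEdge f).component r) q e).edges ↔
      e' ∈ D.edges := by
  rw [mem_piece_edges, or_iff_right hee]
  refine ⟨fun h => Finset.mem_of_mem_erase h.1, fun h => ?_⟩
  have hG : e' ∈ (D.eraseEdge f).edges := by
    refine Finset.mem_erase.2 ⟨?_, h⟩
    rintro rfl
    rcases hinc with rfl | rfl
    exacts [hvf.1 rfl, hvf.2 rfl]
  have hiff := mem_component_iff_of_mem_edges (r := r) hD.eraseEdge hG
  rcases hinc with rfl | rfl
  · exact ⟨hG, hv, hiff.1 hv⟩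
  · exact ⟨hG, hiff.2 hv, hv⟩

lemma isXEdge_piece {X : XDir} {d : ℕ × ℕ} (hd : D.isXEdge X d) (hdf : d ≠ f)
    (hdS : d.1 ∈ S ∧ d.2 ∈ S) (hq : q ∉ S) (he : e = (p, q) ∨ e = (q, p))
    (hp : D.isInner p) : ((D.eraseEdge f).piece S q e).isXEdge X d := by
  have hmem : d ∈ ((D.eraseEdge f).piece S q e).edges :=
    mem_piece_edges.2 (.inr ⟨Finset.mem_erase.2 ⟨hdf, hd.mem⟩, hdS⟩)
  have hD : ∀ e' ∈ ((D.eraseEdge f).piece S q e).edges, e' ≠ e → e' ∈ D.edges :=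
    fun e' he' hee => Finset.mem_of_mem_erase ((mem_piece_edges.1 he').resolve_left hee).1
  cases X with
  | W =>
    refine ⟨hmem, Finset.mem_insert_of_mem hdS.1, fun x hx => ?_⟩
    by_cases hxe : (x, d.1) = e
    · obtain ⟨y, hy⟩ := hp.2.1
      rcases he with rfl | rfl <;> simp only [Prod.mk.injEq] at hxe
      · exact hq (hxe.2 ▸ hdS.1)
      · exact hd.2.2 y (hxe.2 ▸ hy)
    · exact hd.2.2 x (hD _ hx hxe)
  | E =>
    refine ⟨hmem, Finset.mem_insert_of_mem hdS.2, fun z hz => ?_⟩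
    by_cases hze : (d.2, z) = e
    · obtain ⟨y, hy⟩ := hp.2.2
      rcases he with rfl | rfl <;> simp only [Prod.mk.injEq] at hze
      · exact hd.2.2 y (hze.1 ▸ hy)
      · exact hq (hze.1 ▸ hdS.2)
    · exact hd.2.2 z (hD _ hz hze)

lemma WEFunctional.of_incident_edges (hD : D.WEFunctional) (hDo : D.IsOriented)
    (hp : H.isInner p) (hq : ∀ e' ∈ H.edges, (e'.1 = q ∨ e'.2 = q) → e' = e)
    (hinc : ∀ v ∈ H.verts, v ≠ p → v ≠ q → ∀ e' : ℕ × ℕ, (e'.1 = v ∨ e'.2 = v) →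
      (e' ∈ H.edges ↔ e' ∈ D.edges)) :
    H.WEFunctional := by
  constructor
  · rintro ⟨v, z⟩ ⟨hvz, hv, hvW⟩
    refine ⟨⟨hvz, hv, hvW⟩, fun z' hz' => ?_⟩
    by_cases hvq : v = q
    · simpa using (hq _ hz' (.inl hvq)).trans (hq _ hvz (.inl hvq)).symm
    have hvp : v ≠ p := by
      rintro rfl
      obtain ⟨x, hx⟩ := hp.2.1
      exact hvW x hx
    have hinc' := hinc v hv hvp hvq
    have hvzD := (hinc' _ (.inl rfl)).1 hvz
    have hWD : D.isWEdge (v, z) :=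
      ⟨hvzD, (hDo.1 _ hvzD).1, fun x hx => hvW x ((hinc' _ (.inr rfl)).2 hx)⟩
    exact (hD.1 _ hWD).2 z' ((hinc' _ (.inl rfl)).1 hz')
  · rintro ⟨x, v⟩ ⟨hxv, hv, hvE⟩
    refine ⟨⟨hxv, hv, hvE⟩, fun x' hx' => ?_⟩
    by_cases hvq : v = q
    · simpa using (hq _ hx' (.inr hvq)).trans (hq _ hxv (.inr hvq)).symm
    have hvp : v ≠ p := by
      rintro rfl
      obtain ⟨z, hz⟩ := hp.2.2
      exact hvE z hz
    have hinc' := hinc v hv hvp hvq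
    have hxvD := (hinc' _ (.inr rfl)).1 hxv
    have hED : D.isEEdge (x, v) :=
      ⟨hxvD, (hDo.1 _ hxvD).2, fun z hz => hvE z ((hinc' _ (.inl rfl)).2 hz)⟩
    exact (hD.2 _ hED).2 x' ((hinc' _ (.inr rfl)).1 hx')

section Split

variable {a c b : ℕ}

-- A semipath from `a` to `c` in `D - (a, c)` would close up with `(a, c)` to a semicycle.
lemma target_notMem_component (hD : D.IsOriented) (hasem : D.Asemicyclic)
    (hac : (a, c) ∈ D.edges) : c ∉ (D.eraseEdge (a, c)).component a := by
  intro hc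
  obtain ⟨x, t, hl, hg⟩ := (mem_component.1 hc).exists_cons_cons (hD.2.1 _ hac)
  cases t with
  | nil =>
    obtain rfl : x = c := by simpa using hg
    rcases hl.semiAdj_head with h | h
    · exact Finset.notMem_erase _ _ h
    · exact hD.2.2.1 a x hac (Finset.mem_of_mem_erase h)
  | cons y t =>
    have hlD : D.IsSemipath (a :: x :: y :: t) :=
      hl.mono hl.2.1 fun _ _ _ _ h => semiAdj_of_semiAdj_eraseEdge h
    exact hasem _ (hlD.isSemicycle_append (by simp) rfl hg (.inr hac))

lemma source_notMem_component (hD : D.IsOriented) (hasem : D.Asemicyclic)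
    (hac : (a, c) ∈ D.edges) : a ∉ (D.eraseEdge (a, c)).component c := fun h =>
  target_notMem_component hD hasem hac (mem_component.2 (mem_component.1 h).symm)

lemma disjoint_component_eraseEdge (hD : D.IsOriented) (hasem : D.Asemicyclic)
    (hac : (a, c) ∈ D.edges) :
    Disjoint ((D.eraseEdge (a, c)).component a) ((D.eraseEdge (a, c)).component c) :=
  Finset.disjoint_left.2 fun _ hva hvc => target_notMem_component hD hasem hac
    (mem_component.2 ((mem_component.1 hva).trans (mem_component.1 hvc).symm))

-- The two halves `D_W`, `D_E` of `D = D_W[(a,b)-(b',c)]D_E` along the inner edge `(a, c)`.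
noncomputable def westPart (D : DG) (a c b : ℕ) : DG :=
  (D.eraseEdge (a, c)).piece ((D.eraseEdge (a, c)).component a) b (a, b)

noncomputable def eastPart (D : DG) (a c b : ℕ) : DG :=
  (D.eraseEdge (a, c)).piece ((D.eraseEdge (a, c)).component c) b (b, c)

lemma funcEEdge_westPart (ha : a ∈ D.verts) (hb : b ∉ D.verts) :
    (D.westPart a c b).funcEEdge (a, b) :=
  funcEEdge_piece (mem_component.2 (Joined.refl (D := D.eraseEdge (a, c)) ha))
    (notMem_component_eraseEdge hb)

lemma funcWEdge_eastPart (hc : c ∈ D.verts) (hb : b ∉ D.verts) :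
    (D.eastPart a c b).funcWEdge (b, c) :=
  funcWEdge_piece (mem_component.2 (Joined.refl (D := D.eraseEdge (a, c)) hc))
    (notMem_component_eraseEdge hb)

end Split

end DG

open DG

def ConstructibleAt (D : DG) (X : XDir) (d : ℕ × ℕ) : Prop :=
  ∃ G : CTree, IsConstructionQ G ∧ G.rootGraph = D ∧ ∀ Y, G.dist Y X = d

lemma isConstructionQ_mkNode {GW GE : CTree} {eW eE : ℕ × ℕ} (hW : IsConstructionQ GW)
    (hE : IsConstructionQ GE) (hdisj : Disjoint GW.rootGraph.verts GE.rootGraph.verts)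
    (heW : GW.rootGraph.funcEEdge eW) (heE : GE.rootGraph.funcWEdge eE)
    (hXYC : ∀ Y, eW = GW.dist Y .E ∨ eE = GE.dist Y .W) :
    IsConstructionQ (mkNode GW GE eW eE) :=
  .node _ _ _ _ _ _ hW hE hdisj heW heE rfl hXYC (fun _ => rfl) (fun _ => rfl)

section Gluing

variable {GW GE : CTree} {DW DE : DG} {eW eE d : ℕ × ℕ} {X : XDir} {Y : YDir}

lemma mkNode_dist_of_west (hE : GE.dist Y .W = eE) (hW : GW.dist Y X = d) (hd : d ≠ eW) :
    (mkNode GW GE eW eE).dist Y X = d := by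
  cases X
  · exact (if_pos hE.symm).trans hW
  · exact (if_neg fun h => hd (hW ▸ h.symm)).trans hW

lemma mkNode_dist_of_east (hW : GW.dist Y .E = eW) (hE : GE.dist Y X = d) (hd : d ≠ eE) :
    (mkNode GW GE eW eE).dist Y X = d := by
  cases X
  · exact (if_neg fun h => hd (hE ▸ h.symm)).trans hE
  · exact (if_pos hW.symm).trans hE

lemma ConstructibleAt.cut_of_west (hdisj : Disjoint DW.verts DE.verts)
    (heW : DW.funcEEdge eW) (heE : DE.funcWEdge eE) (hW : ConstructibleAt DW X d)
    (hE : ConstructibleAt DE .W eE) (hd : d ≠ eW) : ConstructibleAt (DW.cut DE eW eE) X d := by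
  obtain ⟨GW, hGW, rfl, hWd⟩ := hW
  obtain ⟨GE, hGE, rfl, hEe⟩ := hE
  exact ⟨mkNode GW GE eW eE, isConstructionQ_mkNode hGW hGE hdisj heW heE
    fun Y => .inr (hEe Y).symm, rfl, fun Y => mkNode_dist_of_west (hEe Y) (hWd Y) hd⟩

lemma ConstructibleAt.cut_of_east (hdisj : Disjoint DW.verts DE.verts)
    (heW : DW.funcEEdge eW) (heE : DE.funcWEdge eE) (hW : ConstructibleAt DW .E eW)
    (hE : ConstructibleAt DE X d) (hd : d ≠ eE) : ConstructibleAt (DW.cut DE eW eE) X d := by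
  obtain ⟨GW, hGW, rfl, hWe⟩ := hW
  obtain ⟨GE, hGE, rfl, hEd⟩ := hE
  exact ⟨mkNode GW GE eW eE, isConstructionQ_mkNode hGW hGE hdisj heW heE
    fun Y => .inl (hWe Y).symm, rfl, fun Y => mkNode_dist_of_east (hWe Y) (hEd Y) hd⟩

end Gluing

namespace IsQGraph

variable {D : DG} {q r s a c b b' v : ℕ} {e f : ℕ × ℕ}

lemma exists_semiAdj_isInner (hQ : IsQGraph D) (hb : D.isInner b) (hv : v ∈ D.verts)
    (hvb : v ≠ b) : ∃ x, D.semiAdj v x ∧ D.isInner x := by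
  obtain ⟨x, t, hl, hg⟩ := Joined.exists_cons_cons (hQ.2.1 v hv b hb.1) hvb
  refine ⟨x, hl.semiAdj_head, ?_⟩
  cases t with
  | nil =>
    obtain rfl : x = b := by simpa using hg
    exact hb
  | cons y t =>
    have hvy : v ≠ y := by
      have := hl.2.2.1
      simp only [List.nodup_cons, List.mem_cons, not_or] at this
      exact this.1.2.1
    exact isInner_of_semiAdj_of_ne hQ.2.2.2.1 (hl.2.1 x (by simp)) hl.semiAdj_head.symm
      hl.of_cons.semiAdj_head hvy

lemma eq_of_isInner (hQ : IsQGraph D) (hno : ∀ e, ¬ D.isInnerEdge e) (hb : D.isInner b)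
    (hv : D.isInner v) : v = b := by
  by_contra hvb
  obtain ⟨x, hvx | hxv, hx⟩ := hQ.exists_semiAdj_isInner hb hv.1 hvb
  · exact hno _ ⟨hvx, hv, hx⟩
  · exact hno _ ⟨hxv, hx, hv⟩

lemma semiAdj_of_isInner (hQ : IsQGraph D) (hno : ∀ e, ¬ D.isInnerEdge e) (hb : D.isInner b)
    (hv : v ∈ D.verts) (hvb : v ≠ b) : D.semiAdj v b := by
  obtain ⟨x, hvx, hx⟩ := hQ.exists_semiAdj_isInner hb hv hvb
  rwa [hQ.eq_of_isInner hno hb hx] at hvx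

lemma incident_of_isInner (hQ : IsQGraph D) (hno : ∀ e, ¬ D.isInnerEdge e) (hb : D.isInner b)
    (he : e ∈ D.edges) : e.1 = b ∨ e.2 = b := by
  by_contra! h
  have hu : e.1 ∈ D.verts := (hQ.1.1 e he).1
  exact h.1 (hQ.eq_of_isInner hno hb (isInner_of_semiAdj_of_ne hQ.2.2.2.1 hu
    (hQ.semiAdj_of_isInner hno hb hu h.1) (.inl he) h.2.symm))

lemma isBasicQ (hQ : IsQGraph D) (hno : ∀ e, ¬ D.isInnerEdge e) (hb : D.isInner b)
    {ε : DistE} (hε : ∀ Y, ε Y .W ∈ D.edges ∧ (ε Y .W).2 = b ∧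
      ε Y .E ∈ D.edges ∧ (ε Y .E).1 = b) : IsBasicQ D ε := by
  refine ⟨hQ.1, b, hb.1, fun e he => hQ.incident_of_isInner hno hb he, fun v hv => ?_,
    hb.2.1, hb.2.2, hε⟩
  by_cases hvb : v = b
  · exact .inl hvb
  · exact .inr (hQ.semiAdj_of_isInner hno hb hv hvb)

lemma constructibleAt_of_forall_not_isInnerEdge (hQ : IsQGraph D)
    (hno : ∀ e, ¬ D.isInnerEdge e) {X : XDir} {d : ℕ × ℕ} (hd : D.isXEdge X d) :
    ConstructibleAt D X d := by
  obtain ⟨b, hb⟩ := hQ.2.2.2.2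
  obtain ⟨⟨a, hab⟩, ⟨c, hbc⟩⟩ := hb.2
  let ε : DistE := fun _ => Function.update (pick (a, b) (b, c)) X d
  refine ⟨.leaf D ε, .leaf D ε (hQ.isBasicQ hno hb fun Y => ?_), rfl,
    fun Y => Function.update_self ..⟩
  have hdb := hQ.incident_of_isInner hno hb hd.mem
  cases X with
  | W =>
    have hd2 : d.2 = b := hdb.resolve_left fun h => hd.2.2 a (h ▸ hab)
    exact ⟨hd.1, hd2, hbc, rfl⟩
  | E =>
    have hd1 : d.1 = b := hdb.resolve_right fun h => hd.2.2 c (h ▸ hbc)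
    exact ⟨hab, rfl, hd.1, hd1⟩

lemma piece_component (hQ : IsQGraph D) (hr : r ∈ D.verts) (hq : q ∉ D.verts)
    (he : e = (r, q) ∨ e = (q, r)) (hf : f = (r, s) ∨ f = (s, r))
    (hs : s ∉ (D.eraseEdge f).component r)
    (hinner : ((D.eraseEdge f).piece ((D.eraseEdge f).component r) q e).isInner r) :
    IsQGraph ((D.eraseEdge f).piece ((D.eraseEdge f).component r) q e) := by
  have hqS : q ∉ (D.eraseEdge f).component r := notMem_component_eraseEdge hq
  refine ⟨hQ.1.eraseEdge.piece (mem_component.2 (.refl hr)) hqS he,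
    weaklyConnected_piece_component hr hq he, hQ.2.2.1.eraseEdge.piece component_subset hqS he,
    hQ.2.2.2.1.of_incident_edges hQ.1 hinner (fun e' he' h => eq_of_mem_piece_edges hqS he' h)
      fun v hv hvr hvq e' hinc => ?_, r, hinner⟩
  have hvS := (Finset.mem_insert.1 hv).resolve_left hvq
  have hvs : v ≠ s := fun h => hs (h ▸ hvS)
  have hvf : v ≠ f.1 ∧ v ≠ f.2 := by
    rcases hf with rfl | rfl
    exacts [⟨hvr, hvs⟩, ⟨hvs, hvr⟩]
  refine mem_piece_component_iff hQ.1 hvS hvf hinc ?_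
  rintro rfl
  rcases he with rfl | rfl <;> rcases hinc with h | h <;> simp_all

-- A semipath from `a` to `v` either starts with the edge `(a, c)`, and then its tail joins `c`
-- to `v` in `D - (a, c)`, or it avoids `(a, c)` altogether.
lemma mem_component_or_mem_component (hQ : IsQGraph D) (hac : (a, c) ∈ D.edges)
    (hv : v ∈ D.verts) :
    v ∈ (D.eraseEdge (a, c)).component a ∨ v ∈ (D.eraseEdge (a, c)).component c := by
  have ha : a ∈ D.verts := (hQ.1.1 _ hac).1
  by_cases hav : a = v
  · exact .inl (mem_component.2 (hav ▸ .refl ha))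
  obtain ⟨x, t, hl, hg⟩ := Joined.exists_cons_cons (hQ.2.1 a ha v hv) hav
  have hat : a ∉ x :: t := (List.nodup_cons.1 hl.2.2.1).1
  have htail : (D.eraseEdge (a, c)).IsSemipath (x :: t) :=
    hl.of_cons.mono hl.of_cons.2.1 fun y hy z hz h => semiAdj_eraseEdge h
      (fun h' => hat ((Prod.mk.inj h').1 ▸ hy)) (fun h' => hat ((Prod.mk.inj h').1 ▸ hz))
  by_cases hxc : x = c
  · exact .inr (mem_component.2
      ⟨x :: t, htail, by simp [hxc], by rwa [List.getLast?_cons_cons] at hg⟩)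
  · refine .inl (mem_component.2 ⟨a :: x :: t, htail.cons ha hat ?_, rfl, hg⟩)
    exact semiAdj_eraseEdge hl.semiAdj_head (fun h => hxc (Prod.mk.inj h).2)
      (fun h => hat ((Prod.mk.inj h).1 ▸ List.mem_cons_self))

lemma westPart (hQ : IsQGraph D) (hac : (a, c) ∈ D.edges) (ha : D.isInner a)
    (hb : b ∉ D.verts) : IsQGraph (D.westPart a c b) := by
  have hcS := target_notMem_component hQ.1 hQ.2.2.1 hac
  refine hQ.piece_component ha.1 hb (.inl rfl) (.inl rfl) hcS
    ⟨Finset.mem_insert_of_mem (mem_component.2 (.refl ha.1)), ?_, b, Finset.mem_insert_self _ _⟩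
  obtain ⟨x, hxa⟩ := ha.2.1
  have hG : (x, a) ∈ (D.eraseEdge (a, c)).edges :=
    Finset.mem_erase.2 ⟨fun h => hQ.1.2.1 _ hac (Prod.mk.inj h).2, hxa⟩
  have haS : a ∈ (D.eraseEdge (a, c)).component a := mem_component.2 (.refl ha.1)
  exact ⟨x, mem_piece_edges.2 (.inr ⟨hG,
    (mem_component_iff_of_mem_edges hQ.1.eraseEdge hG).2 haS, haS⟩)⟩

lemma eastPart (hQ : IsQGraph D) (hac : (a, c) ∈ D.edges) (hc : D.isInner c)
    (hb : b ∉ D.verts) : IsQGraph (D.eastPart a c b) := by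
  have haS := source_notMem_component hQ.1 hQ.2.2.1 hac
  refine hQ.piece_component hc.1 hb (.inr rfl) (.inr rfl) haS
    ⟨Finset.mem_insert_of_mem (mem_component.2 (.refl hc.1)), ⟨b, Finset.mem_insert_self _ _⟩, ?_⟩
  obtain ⟨z, hcz⟩ := hc.2.2
  have hG : (c, z) ∈ (D.eraseEdge (a, c)).edges :=
    Finset.mem_erase.2 ⟨fun h => hQ.1.2.1 _ hac (Prod.mk.inj h).1.symm, hcz⟩
  have hcS : c ∈ (D.eraseEdge (a, c)).component c := mem_component.2 (.refl hc.1)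
  exact ⟨z, mem_piece_edges.2 (.inr ⟨hG, hcS,
    (mem_component_iff_of_mem_edges hQ.1.eraseEdge hG).1 hcS⟩)⟩


lemma card_westPart_lt (hQ : IsQGraph D) (hac : (a, c) ∈ D.edges) (hc : D.isInner c) :
    (D.westPart a c b).edges.card < D.edges.card := by
  obtain ⟨z, hcz⟩ := hc.2.2
  exact card_piece_lt hac hcz (fun h => hQ.1.2.1 _ hac (Prod.mk.inj h).1)
    fun h => target_notMem_component hQ.1 hQ.2.2.1 hac h.1

lemma card_eastPart_lt (hQ : IsQGraph D) (hac : (a, c) ∈ D.edges) (ha : D.isInner a) :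
    (D.eastPart a c b).edges.card < D.edges.card := by
  obtain ⟨x, hxa⟩ := ha.2.1
  exact card_piece_lt hac hxa (fun h => hQ.1.2.1 _ hac (Prod.mk.inj h).2.symm)
    fun h => source_notMem_component hQ.1 hQ.2.2.1 hac h.2

lemma disjoint_westPart_eastPart (hQ : IsQGraph D) (hac : (a, c) ∈ D.edges)
    (hb : b ∉ D.verts) (hb' : b' ∉ D.verts) (hbb' : b ≠ b') :
    Disjoint (D.westPart a c b).verts (D.eastPart a c b').verts :=
  Finset.disjoint_insert_left.2
    ⟨Finset.mem_insert.not.2 (not_or.2 ⟨hbb', notMem_component_eraseEdge hb⟩),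
      Finset.disjoint_insert_right.2
        ⟨notMem_component_eraseEdge hb', disjoint_component_eraseEdge hQ.1 hQ.2.2.1 hac⟩⟩

lemma cut_westPart_eastPart (hQ : IsQGraph D) (hac : (a, c) ∈ D.edges)
    (hb : b ∉ D.verts) (hb' : b' ∉ D.verts) :
    (D.westPart a c b).cut (D.eastPart a c b') (a, b) (b', c) = D := by
  have hbS := notMem_component_eraseEdge (f := (a, c)) (r := a) hb
  have hb'S := notMem_component_eraseEdge (f := (a, c)) (r := c) hb'
  have hpart {v} (hv : v ∈ D.verts) := hQ.mem_component_or_mem_component hac hv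
  refine DG.ext ?_ ?_
  · ext v
    simp only [cut, DG.westPart, DG.eastPart, piece, Finset.mem_sdiff, Finset.mem_union,
      Finset.mem_insert, Finset.mem_singleton]
    constructor
    · rintro ⟨(rfl | h) | (rfl | h), hne⟩
      · exact absurd (.inl rfl) hne
      · exact (mem_component.1 h).right_mem
      · exact absurd (.inr rfl) hne
      · exact (mem_component.1 h).right_mem
    · intro hv
      refine ⟨(hpart hv).imp .inr .inr, ?_⟩
      rintro (rfl | rfl)
      exacts [hb hv, hb' hv]
  · simp only [cut, DG.westPart, DG.eastPart, piece]
    rw [Finset.erase_insert fun h => hbS (Finset.mem_filter.1 h).2.2,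
      Finset.erase_insert fun h => hb'S (Finset.mem_filter.1 h).2.1]
    ext e
    simp only [Finset.mem_insert, Finset.mem_union, Finset.mem_filter]
    constructor
    · rintro (rfl | ⟨h, -⟩ | ⟨h, -⟩)
      exacts [hac, Finset.mem_of_mem_erase h, Finset.mem_of_mem_erase h]
    · intro he
      by_cases hea : e = (a, c)
      · exact .inl hea
      have hG : e ∈ (D.eraseEdge (a, c)).edges := Finset.mem_erase.2 ⟨hea, he⟩
      rcases hpart (hQ.1.1 e he).1 with h | h
      · exact .inr (.inl ⟨hG, h, (mem_component_iff_of_mem_edges hQ.1.eraseEdge hG).1 h⟩)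
      · exact .inr (.inr ⟨hG, h, (mem_component_iff_of_mem_edges hQ.1.eraseEdge hG).1 h⟩)

lemma isXEdge_westPart_or_eastPart (hQ : IsQGraph D) (hac : (a, c) ∈ D.edges)
    (ha : D.isInner a) (hc : D.isInner c) (hb : b ∉ D.verts) (hb' : b' ∉ D.verts)
    {X : XDir} {d : ℕ × ℕ} (hd : D.isXEdge X d) :
    (D.westPart a c b).isXEdge X d ∧ d ≠ (a, b) ∨
      (D.eastPart a c b').isXEdge X d ∧ d ≠ (b', c) := by
  have hdac : d ≠ (a, c) := by
    rintro rfl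
    cases X
    · obtain ⟨x, hx⟩ := ha.2.1
      exact hd.2.2 x hx
    · obtain ⟨z, hz⟩ := hc.2.2
      exact hd.2.2 z hz
  have hdG : d ∈ (D.eraseEdge (a, c)).edges := Finset.mem_erase.2 ⟨hdac, hd.mem⟩
  have hends := hQ.1.1 d hd.mem
  rcases hQ.mem_component_or_mem_component hac hends.1 with h₁ | h₁
  · refine .inl ⟨isXEdge_piece hd hdac
      ⟨h₁, (mem_component_iff_of_mem_edges hQ.1.eraseEdge hdG).1 h₁⟩
      (notMem_component_eraseEdge hb) (.inl rfl) ha, ?_⟩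
    rintro rfl
    exact hb hends.2
  · refine .inr ⟨isXEdge_piece hd hdac
      ⟨h₁, (mem_component_iff_of_mem_edges hQ.1.eraseEdge hdG).1 h₁⟩
      (notMem_component_eraseEdge hb') (.inr rfl) hc, ?_⟩
    rintro rfl
    exact hb' hends.1

theorem constructibleAt (hQ : IsQGraph D) {X : XDir} {d : ℕ × ℕ} (hd : D.isXEdge X d) :
    ConstructibleAt D X d := by
  induction hn : D.edges.card using Nat.strong_induction_on generalizing D X d with
  | _ n ih =>
  subst hn
  by_cases hno : ∀ e, ¬ D.isInnerEdge e
  · exact hQ.constructibleAt_of_forall_not_isInnerEdge hno hd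
  · obtain ⟨⟨a, c⟩, hac, ha, hc⟩ := not_forall_not.1 hno
    obtain ⟨b, hb⟩ := Infinite.exists_notMem_finset D.verts
    obtain ⟨b', hb'⟩ := Infinite.exists_notMem_finset (insert b D.verts)
    rw [Finset.mem_insert, not_or] at hb'
    have hW {X d} (hd : (D.westPart a c b).isXEdge X d) :=
      ih _ (hQ.card_westPart_lt hac hc) (hQ.westPart hac ha hb) hd rfl
    have hE {X d} (hd : (D.eastPart a c b').isXEdge X d) :=
      ih _ (hQ.card_eastPart_lt hac ha) (hQ.eastPart hac hc hb'.2) hd rfl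
    have hdisj := hQ.disjoint_westPart_eastPart hac hb hb'.2 (Ne.symm hb'.1)
    have heW := funcEEdge_westPart (c := c) ha.1 hb
    have heE := funcWEdge_eastPart (a := a) hc.1 hb'.2
    rw [← hQ.cut_westPart_eastPart hac hb hb'.2]
    rcases hQ.isXEdge_westPart_or_eastPart hac ha hc hb hb'.2 hd with ⟨hdW, hdb⟩ | ⟨hdE, hdb⟩
    · exact .cut_of_west hdisj heW heE (hW hdW) (hE heE.1) hdb
    · exact .cut_of_east hdisj heW heE (hW heW.1) (hE hdE) hdb

end IsQGraph

/-- Proposition 7.1: for every Q-graph `D`, every `X ∈ {W, E}` and every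
`X`-edge `d` of `D`, there is a construction `G` of a global Q-graph whose
root graph is `D` such that `NX(G) = SX(G) = d`. -/
theorem prop_7_1 (D : DG) (hQ : IsQGraph D) (X : XDir) (d : ℕ × ℕ)
    (hd : D.isXEdge X d) :
    ∃ G : CTree, IsConstructionQ G ∧ G.rootGraph = D ∧
      G.dist YDir.N X = d ∧ G.dist YDir.S X = d := by
  obtain ⟨G, hG, hroot, hdist⟩ := hQ.constructibleAt hd
  exact ⟨G, hG, hroot, hdist .N, hdist .S⟩

end PluralCuts
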